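/- Let ℓ, m ≥ 1 be integers, at least one of which is even, and let Φ be the total Culler–Shalen seminorm function for K = J(ℓ,−m) (with α = ℓm+1 and β = m). Then for all integers p, q: 2Φ(p,q) = (ℓm − ℓ − m)|p| + ℓ|p − 2mq| + m|p + 2ℓq| if ℓ and m are both even; 2Φ(p,q) = (ℓ−1)(m−1)|p + 2mq| + (ℓ−1)|p| + m|p + 2(ℓ+m)q| if ℓ is odd; 2Φ(p,q) = (ℓ−1)(m−1)|p − 2ℓq| + ℓ|p − 2(ℓ+m)q| + (m−1)|p| if m is odd. -/

import Mathlib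

/-!
Every expansion `L` of a nonzero rational `r` with all entries of absolute value at least `2` is
forced entry by entry: `L = n :: L'` with `cf L' = r⁻¹ - n` and `|cf L'| < 1`, so `n` is one of the
two integers nearest to `r⁻¹`. For `α = ℓm + 1`, `β = m` this leaves exactly three expansions:
`[ℓ, m]` (only when `ℓ, m ≥ 2`), `[ℓ + 1, -2, 2, …]` of length `m`, and `[-2, 2, …, ±(m + 1)]` of
length `ℓ`. Their weights are `(ℓ - 1)(m - 1)`, `ℓ`, `m` and their `s`-values are `0`, `m`, `-ℓ`.
The all-even expansion `n₀` is the one allowed by the parities of `ℓ` and `m`, and substituting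
these values into `Φ` gives the three formulas.
-/

noncomputable section

/-- The continued fraction value `cf [n_1, …, n_k] = 1/(n_1 + 1/(n_2 + ⋯ + 1/n_k))`. -/
def cf : List ℤ → ℚ
  | [] => 0
  | n :: L => 1 / ((n : ℚ) + cf L)

/-- `n⁺`: the number of (0-based) indices `j` with `sign(n_j) = (−1)^j`
(1-based: `sign(n_i) = (−1)^{i−1}`). -/
def nplus (L : List ℤ) : ℕ :=
  ((Finset.range L.length).filter (fun j => (L.getD j 0).sign = (-1) ^ j)).card

/-- `s(n) = n⁺ − n⁻` where `n⁻ = k − n⁺`. -/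
def sval (L : List ℤ) : ℤ := 2 * (nplus L : ℤ) - L.length

/-- The set `S` of all finite integer sequences with all entries of absolute value at
least `2` whose continued fraction value is `β/α` or `(β−α)/α`. -/
def Sset (α β : ℤ) : Set (List ℤ) :=
  {L | (∀ n ∈ L, 2 ≤ |n|) ∧
    (cf L = (β : ℚ) / (α : ℚ) ∨ cf L = ((β : ℚ) - (α : ℚ)) / (α : ℚ))}

/-- The weight `∏_{j=1}^{k} (|n_j| − 1)` of an expansion. -/
def weightProd (L : List ℤ) : ℤ := (L.map (fun n => |n| - 1)).prod

/-- The total Culler–Shalen seminorm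
`Φ(p,q) = (1/2)(−|p| + Σ_{n∈S} |p − N_n·q|·∏_j (|n_j| − 1))`, where
`N_n = 2(s(n) − s(n₀))` and `n₀` is the all-even expansion in `S`. -/
def totalSeminorm (α β : ℤ) (n₀ : List ℤ) (p q : ℤ) : ℚ :=
  (1 / 2) * (-(|(p : ℚ)|) +
    ∑ᶠ L ∈ Sset α β, ((|p - 2 * (sval L - sval n₀) * q| * weightProd L : ℤ) : ℚ))

open Finset

lemma cf_map_neg (L : List ℤ) : cf (L.map Neg.neg) = -cf L := by
  induction L with
  | nil => simp [cf]
  | cons n L ih =>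
    rw [List.map_cons, cf, cf, ih, Int.cast_neg, ← neg_add, div_neg]

lemma abs_cf_lt_one {L : List ℤ} (hL : ∀ x ∈ L, 2 ≤ |x|) : |cf L| < 1 := by
  induction L with
  | nil => simp [cf]
  | cons n L ih =>
    obtain ⟨hn, hL⟩ := List.forall_mem_cons.mp hL
    have hn' : (2 : ℚ) ≤ |(n : ℚ)| := by exact_mod_cast hn
    have htri := abs_sub_abs_le_abs_sub (n : ℚ) (-cf L)
    rw [abs_neg, sub_neg_eq_add] at htri
    have hden : 1 < |(n : ℚ) + cf L| := by linarith [ih hL]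
    rw [cf, abs_div, abs_one, div_lt_one (by linarith)]
    exact hden

lemma exists_cons_of_cf_eq {L : List ℤ} {r : ℚ} (hr : r ≠ 0) (hcf : cf L = r) :
    ∃ n L', L = n :: L' ∧ cf L' = r⁻¹ - n := by
  cases L with
  | nil => exact absurd hcf.symm hr
  | cons n L' => exact ⟨n, L', rfl, by rw [← hcf, cf, one_div, inv_inv]; ring⟩

lemma le_and_le_of_abs_sub_lt_one {x : ℚ} {a b n : ℤ} (ha : a ≤ x) (hb : x ≤ b)
    (h : |x - n| < 1) : a ≤ n ∧ n ≤ b := by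
  obtain ⟨h₁, h₂⟩ := abs_sub_lt_iff.mp h
  have ha' : (a : ℚ) < n + 1 := by linarith
  have hb' : (n : ℚ) < b + 1 := by linarith
  exact ⟨Int.lt_add_one_iff.mp (by exact_mod_cast ha'),
    Int.lt_add_one_iff.mp (by exact_mod_cast hb')⟩

lemma eq_nil_of_cf_eq_zero {L : List ℤ} (hL : ∀ x ∈ L, 2 ≤ |x|) (hcf : cf L = 0) : L = [] := by
  cases L with
  | nil => rfl
  | cons n L =>
    obtain ⟨hn, hL⟩ := List.forall_mem_cons.mp hL
    have hn' : (2 : ℚ) ≤ |(n : ℚ)| := by exact_mod_cast hn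
    rw [cf, one_div, inv_eq_zero, add_eq_zero_iff_eq_neg] at hcf
    linarith [abs_cf_lt_one hL, abs_neg (cf L) ▸ hcf ▸ hn']

lemma eq_singleton_of_cf_eq_inv {L : List ℤ} {N : ℤ} (hN : N ≠ 0) (hL : ∀ x ∈ L, 2 ≤ |x|)
    (hcf : cf L = (N : ℚ)⁻¹) : L = [N] := by
  obtain ⟨n, L', rfl, hcf'⟩ := exists_cons_of_cf_eq (by simpa using hN) hcf
  rw [inv_inv] at hcf'
  have hL' := (List.forall_mem_cons.mp hL).2
  have hNn : N - n = 0 := by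
    rw [← Int.abs_lt_one_iff]
    exact_mod_cast hcf' ▸ abs_cf_lt_one hL'
  obtain rfl : n = N := by omega
  rw [eq_nil_of_cf_eq_zero hL' (by rw [hcf', sub_self])]

lemma sval_eq_sum {L : List ℤ} (hL : ∀ x ∈ L, x ≠ 0) :
    sval L = ∑ j ∈ range L.length, (L.getD j 0).sign * (-1) ^ j := by
  rw [sval, nplus, natCast_card_filter, mul_sum,
    show (L.length : ℤ) = ∑ _j ∈ range L.length, 1 by simp, ← sum_sub_distrib]
  refine sum_congr rfl fun j hj => ?_
  have hj' : j < L.length := mem_range.mp hj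
  have hx := hL _ (List.getD_eq_getElem _ 0 hj' ▸ List.getElem_mem hj')
  generalize L.getD j 0 = x at hx ⊢
  rcases neg_one_pow_eq_or ℤ j with h | h <;> rcases hx.lt_or_gt with hx | hx <;>
    simp [h, Int.sign_eq_neg_one_of_neg, Int.sign_eq_one_of_pos, hx]

lemma sval_cons {n : ℤ} {L : List ℤ} (hn : n ≠ 0) (hL : ∀ x ∈ L, x ≠ 0) :
    sval (n :: L) = n.sign - sval L := by
  rw [sval_eq_sum (List.forall_mem_cons.mpr ⟨hn, hL⟩), sval_eq_sum hL, List.length_cons,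
    sum_range_succ']
  simp only [List.getD_cons_succ, List.getD_cons_zero, pow_succ, mul_neg,
    sum_neg_distrib, pow_zero, mul_one]
  ring

lemma sval_map_neg {L : List ℤ} (hL : ∀ x ∈ L, x ≠ 0) : sval (L.map Neg.neg) = -sval L := by
  rw [sval_eq_sum (List.forall_mem_map.mpr fun x hx => neg_ne_zero.mpr (hL x hx)),
    sval_eq_sum hL, List.length_map, ← sum_neg_distrib]
  refine sum_congr rfl fun j _ => ?_
  have hget := List.getD_map (l := L) (n := j) (d := 0) Neg.neg
  rw [neg_zero] at hget
  rw [hget, Int.sign_neg, neg_mul]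

lemma weightProd_cons (n : ℤ) (L : List ℤ) : weightProd (n :: L) = (|n| - 1) * weightProd L :=
  List.prod_cons

lemma weightProd_map_neg (L : List ℤ) : weightProd (L.map Neg.neg) = weightProd L := by
  simp [weightProd, Function.comp_def]

/-- Prepends the alternating block `-2, 2, -2, …` of length `k`, negating `L` when `k` is odd. -/
def twoChain : ℕ → List ℤ → List ℤ
  | 0, L => L
  | k + 1, L => -2 :: (twoChain k L).map Neg.neg

section TwoChain

variable {L : List ℤ}

lemma forall_mem_twoChain {P : ℤ → Prop} (hneg : ∀ x, P x → P (-x)) (h₂ : P (-2))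
    (hL : ∀ x ∈ L, P x) (k : ℕ) : ∀ x ∈ twoChain k L, P x := by
  induction k with
  | zero => exact hL
  | succ k ih =>
    simp only [twoChain, List.forall_mem_cons, List.forall_mem_map]
    exact ⟨h₂, fun x hx => hneg x (ih x hx)⟩

lemma forall_mem_of_forall_mem_twoChain {P : ℤ → Prop} (hneg : ∀ x, P x → P (-x)) {k : ℕ}
    (h : ∀ x ∈ twoChain k L, P x) : ∀ x ∈ L, P x := by
  induction k with
  | zero => exact h
  | succ k ih =>
    simp only [twoChain, List.forall_mem_cons, List.forall_mem_map] at h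
    exact ih fun x hx => neg_neg x ▸ hneg _ (h.2 x hx)

lemma cf_twoChain {a d : ℚ} (ha : 0 ≤ a) (hd : 0 < d) (hL : cf L = -a / (a + d)) (k : ℕ) :
    cf (twoChain k L) = -(a + k * d) / (a + (k + 1) * d) := by
  induction k with
  | zero => simpa [twoChain] using hL
  | succ k ih =>
    have h₁ : 0 < a + (k + 1) * d := by positivity
    have hden : (-2 : ℚ) + -(-(a + k * d) / (a + (k + 1) * d))
        = -(a + (k + 2) * d) / (a + (k + 1) * d) := by
      field_simp
      ring
    rw [twoChain, cf, cf_map_neg, ih, Int.cast_neg, Int.cast_ofNat, hden, one_div_div, div_neg,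
      ← neg_div]
    push_cast
    ring_nf

lemma eq_twoChain_of_cf_eq {a d : ℚ} (ha : 0 ≤ a) (hd : 0 < d) {L₀ : List ℤ}
    (h₀ : ∀ L : List ℤ, (∀ x ∈ L, 2 ≤ |x|) → cf L = -a / (a + d) → L = L₀) (k : ℕ) :
    ∀ L : List ℤ, (∀ x ∈ L, 2 ≤ |x|) → cf L = -(a + k * d) / (a + (k + 1) * d) →
      L = twoChain k L₀ := by
  induction k with
  | zero => simpa [twoChain] using h₀
  | succ k ih =>
    intro L hL hcf
    have h₁ : 0 < a + (k + 1) * d := by positivity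
    obtain ⟨n, L', rfl, hcf'⟩ := exists_cons_of_cf_eq (by
      push_cast
      exact div_ne_zero (neg_ne_zero.mpr h₁.ne') (by linarith : (0 : ℚ) < _).ne') hcf
    obtain ⟨hn, hL'⟩ := List.forall_mem_cons.mp hL
    have hinv : (-(a + (k + 1 : ℕ) * d) / (a + ((k + 1 : ℕ) + 1) * d))⁻¹
        = -2 + (a + k * d) / (a + (k + 1) * d) := by
      field_simp
      push_cast
      ring
    rw [hinv] at hcf'
    -- the leading entry lies within 1 of a point of `[-2, -1]`, so it must be `-2`
    obtain ⟨hn₁, hn₂⟩ := le_and_le_of_abs_sub_lt_one (a := -2) (b := -1)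
      (x := -2 + (a + k * d) / (a + (k + 1) * d))
      (by push_cast; linarith [div_nonneg (by positivity : 0 ≤ a + k * d) h₁.le])
      (by push_cast; linarith [(div_le_one h₁).mpr (by linarith : a + k * d ≤ a + (k + 1) * d)])
      (hcf' ▸ abs_cf_lt_one hL')
    obtain rfl : n = -2 := by rcases abs_cases n with h | h <;> omega
    have hneg := ih (L'.map Neg.neg)
      (List.forall_mem_map.mpr fun x hx => by simpa using hL' x hx)
      (by rw [cf_map_neg, hcf']; push_cast; ring)
    rw [twoChain, ← hneg, List.map_map, neg_comp_neg, List.map_id]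

lemma sval_twoChain (hL : ∀ x ∈ L, x ≠ 0) (k : ℕ) :
    sval (twoChain k L) = sval L - k := by
  induction k with
  | zero => simp [twoChain]
  | succ k ih =>
    have hk := forall_mem_twoChain (P := (· ≠ 0)) (fun _ => neg_ne_zero.mpr) (by norm_num) hL k
    rw [twoChain,
      sval_cons (by norm_num) (List.forall_mem_map.mpr fun x hx => neg_ne_zero.mpr (hk x hx)),
      sval_map_neg hk, ih, show (-2 : ℤ).sign = -1 from rfl]
    push_cast
    ring

lemma weightProd_twoChain (k : ℕ) : weightProd (twoChain k L) = weightProd L := by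
  induction k with
  | zero => rfl
  | succ k ih =>
    rw [twoChain, weightProd_cons, weightProd_map_neg, ih]
    norm_num

end TwoChain

def posExpansion (ℓ m : ℕ) : List ℤ := ((ℓ : ℤ) + 1) :: twoChain (m - 1) []

def negExpansion (ℓ m : ℕ) : List ℤ := twoChain (ℓ - 1) [-((m : ℤ) + 1)]

section DoubleTwist

variable {ℓ m : ℕ}

lemma cf_pair (hm : m ≠ 0) : cf [(ℓ : ℤ), (m : ℤ)] = m / (ℓ * m + 1) := by
  simp only [cf, Int.cast_natCast, add_zero]
  field_simp

lemma cf_posExpansion (hm : 1 ≤ m) : cf (posExpansion ℓ m) = m / (ℓ * m + 1) := by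
  have hm' : (m : ℚ) ≠ 0 := by positivity
  rw [posExpansion, cf, cf_twoChain le_rfl one_pos (by simp [cf]), Nat.cast_sub hm]
  push_cast
  simp only [zero_add, mul_one, sub_add_cancel]
  rw [show (ℓ : ℚ) + 1 + -(m - 1) / m = (ℓ * m + 1) / m by field_simp; ring, one_div_div]

lemma cf_negExpansion (hℓ : 1 ≤ ℓ) (hm : 1 ≤ m) :
    cf (negExpansion ℓ m) = (m - (ℓ * m + 1)) / (ℓ * m + 1) := by
  have hm' : (0 : ℚ) < m := by exact_mod_cast hm
  have hsingle : cf [-((m : ℤ) + 1)] = -1 / (1 + m) := by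
    simp only [cf, add_zero]
    push_cast
    field_simp
    ring
  rw [negExpansion, cf_twoChain zero_le_one hm' hsingle, Nat.cast_sub hℓ]
  push_cast
  ring

lemma two_le_abs_of_mem_pair (hℓ : 2 ≤ ℓ) (hm : 2 ≤ m) :
    ∀ x ∈ [(ℓ : ℤ), (m : ℤ)], 2 ≤ |x| := by
  simp only [List.forall_mem_cons, Nat.abs_cast, List.not_mem_nil, IsEmpty.forall_iff,
    implies_true, and_true]
  exact ⟨by exact_mod_cast hℓ, by exact_mod_cast hm⟩

lemma two_le_abs_of_mem_posExpansion (hℓ : 1 ≤ ℓ) : ∀ x ∈ posExpansion ℓ m, 2 ≤ |x| := by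
  refine List.forall_mem_cons.mpr ⟨by rw [abs_of_pos (by positivity)]; omega, ?_⟩
  exact forall_mem_twoChain (fun x h => by rwa [abs_neg]) (by norm_num) (by simp) _

lemma two_le_abs_of_mem_negExpansion (hm : 1 ≤ m) : ∀ x ∈ negExpansion ℓ m, 2 ≤ |x| := by
  refine forall_mem_twoChain (fun x h => by rwa [abs_neg]) (by norm_num) ?_ _
  simp only [List.forall_mem_cons, abs_neg, List.not_mem_nil, IsEmpty.forall_iff,
    implies_true, and_true]
  rw [abs_of_pos (by positivity)]
  omega

lemma eq_pair_or_eq_posExpansion (hm : 1 ≤ m) {L : List ℤ} (hL : ∀ x ∈ L, 2 ≤ |x|)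
    (hcf : cf L = m / (ℓ * m + 1)) : L = [(ℓ : ℤ), (m : ℤ)] ∨ L = posExpansion ℓ m := by
  have hm' : (0 : ℚ) < m := by exact_mod_cast hm
  have hm₀ : (m : ℚ) ≠ 0 := hm'.ne'
  obtain ⟨n, L', rfl, hcf'⟩ := exists_cons_of_cf_eq (by positivity) hcf
  have hL' := (List.forall_mem_cons.mp hL).2
  rw [inv_div, show ((ℓ : ℚ) * m + 1) / m = ℓ + 1 / m by field_simp] at hcf'
  obtain ⟨hℓn, hnℓ⟩ := le_and_le_of_abs_sub_lt_one (a := ℓ) (b := ℓ + 1) (x := ℓ + 1 / m)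
    (by push_cast; linarith [one_div_pos.mpr hm'])
    (by push_cast; linarith [(div_le_one hm').mpr (by exact_mod_cast hm : (1 : ℚ) ≤ m)])
    (hcf' ▸ abs_cf_lt_one hL')
  rcases (show n = ℓ ∨ n = ℓ + 1 by omega) with rfl | rfl
  · left
    rw [eq_singleton_of_cf_eq_inv (N := m) (by omega) hL' (by rw [hcf']; push_cast; ring)]
  · right
    rw [posExpansion, eq_twoChain_of_cf_eq le_rfl one_pos
      (fun L hL h => eq_nil_of_cf_eq_zero hL (by simpa using h)) (m - 1) L' hL'
      (by
        rw [hcf', Nat.cast_sub hm]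
        push_cast
        simp only [zero_add, mul_one, sub_add_cancel]
        field_simp
        ring)]

lemma eq_negExpansion_of_cf_eq (hℓ : 1 ≤ ℓ) (hm : 1 ≤ m) {L : List ℤ}
    (hL : ∀ x ∈ L, 2 ≤ |x|) (hcf : cf L = (m - (ℓ * m + 1)) / (ℓ * m + 1)) :
    L = negExpansion ℓ m := by
  have hm' : (0 : ℚ) < m := by exact_mod_cast hm
  refine eq_twoChain_of_cf_eq zero_le_one hm' (fun L hL h => ?_) (ℓ - 1) L hL ?_
  · exact eq_singleton_of_cf_eq_inv (by omega) hL (by rw [h]; push_cast; field_simp; ring)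
  · rw [hcf, Nat.cast_sub hℓ]
    push_cast
    ring

lemma eq_of_mem_Sset (hℓ : 1 ≤ ℓ) (hm : 1 ≤ m) {L : List ℤ}
    (hS : L ∈ Sset ((ℓ : ℤ) * m + 1) m) :
    L = [(ℓ : ℤ), (m : ℤ)] ∨ L = posExpansion ℓ m ∨ L = negExpansion ℓ m := by
  obtain ⟨hL, hcf | hcf⟩ := hS <;> push_cast at hcf
  · exact (eq_pair_or_eq_posExpansion hm hL hcf).imp_right Or.inl
  · exact Or.inr (Or.inr (eq_negExpansion_of_cf_eq hℓ hm hL hcf))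

lemma pair_mem_Sset (hℓ : 2 ≤ ℓ) (hm : 2 ≤ m) :
    [(ℓ : ℤ), (m : ℤ)] ∈ Sset ((ℓ : ℤ) * m + 1) m :=
  ⟨two_le_abs_of_mem_pair hℓ hm, Or.inl (by rw [cf_pair (by omega)]; push_cast; rfl)⟩

lemma posExpansion_mem_Sset (hℓ : 1 ≤ ℓ) (hm : 1 ≤ m) :
    posExpansion ℓ m ∈ Sset ((ℓ : ℤ) * m + 1) m :=
  ⟨two_le_abs_of_mem_posExpansion hℓ, Or.inl (by rw [cf_posExpansion hm]; push_cast; rfl)⟩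

lemma negExpansion_mem_Sset (hℓ : 1 ≤ ℓ) (hm : 1 ≤ m) :
    negExpansion ℓ m ∈ Sset ((ℓ : ℤ) * m + 1) m :=
  ⟨two_le_abs_of_mem_negExpansion hm, Or.inr (by rw [cf_negExpansion hℓ hm]; push_cast; rfl)⟩

lemma sval_pair (hℓ : ℓ ≠ 0) (hm : m ≠ 0) : sval [(ℓ : ℤ), (m : ℤ)] = 0 := by
  rw [sval_cons (by omega) (by simpa using hm), sval_cons (by omega) (by simp),
    Int.sign_natCast_of_ne_zero hℓ, Int.sign_natCast_of_ne_zero hm]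
  rfl

lemma sval_posExpansion (hm : 1 ≤ m) : sval (posExpansion ℓ m) = m := by
  rw [posExpansion, sval_cons (by omega) (forall_mem_twoChain (P := (· ≠ 0))
      (fun _ => neg_ne_zero.mpr) (by norm_num) (by simp) _),
    sval_twoChain (by simp), Int.sign_eq_one_of_pos (by omega), Nat.cast_sub hm,
    show sval [] = 0 from rfl]
  ring

lemma sval_negExpansion (hℓ : 1 ≤ ℓ) : sval (negExpansion ℓ m) = -ℓ := by
  rw [negExpansion, sval_twoChain (by simp; omega), sval_cons (by omega) (by simp),
    Int.sign_eq_neg_one_of_neg (by omega), Nat.cast_sub hℓ, show sval [] = 0 from rfl]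
  ring

lemma weightProd_pair : weightProd [(ℓ : ℤ), (m : ℤ)] = ((ℓ : ℤ) - 1) * (m - 1) := by
  simp [weightProd]

lemma weightProd_posExpansion : weightProd (posExpansion ℓ m) = ℓ := by
  rw [posExpansion, weightProd_cons, weightProd_twoChain, abs_of_nonneg (by positivity),
    show weightProd [] = 1 from rfl]
  ring

lemma weightProd_negExpansion : weightProd (negExpansion ℓ m) = m := by
  rw [negExpansion, weightProd_twoChain, weightProd_cons, abs_neg,
    abs_of_nonneg (by positivity), show weightProd [] = 1 from rfl]
  ring

lemma two_mul_totalSeminorm_eq (hℓ : 1 ≤ ℓ) (hm : 1 ≤ m) (n₀ : List ℤ) (p q : ℤ) :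
    2 * totalSeminorm ((ℓ : ℤ) * m + 1) m n₀ p q =
      ((-|p| + |p + 2 * sval n₀ * q| * ((ℓ - 1) * (m - 1)) + |p - 2 * (m - sval n₀) * q| * ℓ +
        |p + 2 * (ℓ + sval n₀) * q| * m : ℤ) : ℚ) := by
  set f : List ℤ → ℤ := fun L => |p - 2 * (sval L - sval n₀) * q| * weightProd L with hf
  have hs₀ : sval [(ℓ : ℤ), (m : ℤ)] = 0 := sval_pair (by omega) (by omega)
  have hs₁ : sval (posExpansion ℓ m) = m := sval_posExpansion hm
  have hs₂ : sval (negExpansion ℓ m) = -ℓ := sval_negExpansion hℓ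
  have hne : ∀ L L' : List ℤ, sval L ≠ sval L' → L ≠ L' := fun L L' h e => h (congrArg sval e)
  have hdistinct : [(ℓ : ℤ), (m : ℤ)] ∉ ({posExpansion ℓ m, negExpansion ℓ m} : Finset _) ∧
      posExpansion ℓ m ∉ ({negExpansion ℓ m} : Finset _) := by
    simp only [mem_insert, mem_singleton, not_or]
    refine ⟨⟨hne _ _ ?_, hne _ _ ?_⟩, hne _ _ ?_⟩ <;> omega
  -- `[ℓ, m]` lies in `S` only when `ℓ, m ≥ 2`, but otherwise its weight `(ℓ - 1)(m - 1)` vanishes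
  have hsum : ∑ᶠ L ∈ Sset ((ℓ : ℤ) * m + 1) m, ((f L : ℤ) : ℚ) =
      ∑ L ∈ {[(ℓ : ℤ), (m : ℤ)], posExpansion ℓ m, negExpansion ℓ m}, ((f L : ℤ) : ℚ) := by
    refine finsum_cond_eq_sum_of_cond_iff _ fun {L} hL => ?_
    simp only [mem_insert, mem_singleton]
    refine ⟨eq_of_mem_Sset hℓ hm, ?_⟩
    rintro (rfl | rfl | rfl)
    · have hw : weightProd [(ℓ : ℤ), (m : ℤ)] ≠ 0 := fun h => hL (by simp [hf, h])
      rw [weightProd_pair, mul_ne_zero_iff] at hw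
      exact pair_mem_Sset (by omega) (by omega)
    · exact posExpansion_mem_Sset hℓ hm
    · exact negExpansion_mem_Sset hℓ hm
  rw [totalSeminorm, hsum, sum_insert hdistinct.1, sum_insert hdistinct.2, sum_singleton]
  simp only [hf, hs₀, hs₁, hs₂, weightProd_pair, weightProd_posExpansion, weightProd_negExpansion]
  push_cast
  ring_nf

lemma sval_of_forall_even (hℓ : 1 ≤ ℓ) (hm : 1 ≤ m) (hpar : Even ℓ ∨ Even m) {n₀ : List ℤ}
    (hS : n₀ ∈ Sset ((ℓ : ℤ) * m + 1) m) (heven : ∀ n ∈ n₀, Even n) :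
    (Even ℓ ∧ Even m → sval n₀ = 0) ∧ (Odd ℓ → sval n₀ = m) ∧ (Odd m → sval n₀ = -ℓ) := by
  have hcases : (Even ℓ ∧ Even m ∧ sval n₀ = 0) ∨ (Odd ℓ ∧ sval n₀ = m) ∨
      (Odd m ∧ sval n₀ = -ℓ) := by
    rcases eq_of_mem_Sset hℓ hm hS with rfl | rfl | rfl
    · simp only [List.forall_mem_cons, Int.even_coe_nat] at heven
      exact Or.inl ⟨heven.1, heven.2.1, sval_pair (by omega) (by omega)⟩
    · have h := heven _ List.mem_cons_self
      rw [Int.even_add_one, Int.not_even_iff_odd, Int.odd_coe_nat] at h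
      exact Or.inr (Or.inl ⟨h, sval_posExpansion hm⟩)
    · have h := forall_mem_of_forall_mem_twoChain (P := Even) (fun _ => Even.neg) heven _
        List.mem_cons_self
      rw [even_neg, Int.even_add_one, Int.not_even_iff_odd, Int.odd_coe_nat] at h
      exact Or.inr (Or.inr ⟨h, sval_negExpansion hℓ⟩)
  simp only [← Nat.not_even_iff_odd] at hcases ⊢
  tauto

end DoubleTwist

/-- Theorem (seminorms for `J(ℓ,−m)`, `α = ℓm+1`, `β = m`): the stated closed
formulas for `2Φ(p,q)` in the three parity cases. -/
theorem seminorm_J_ell_neg_m (ℓ m : ℕ) (hℓ : 1 ≤ ℓ) (hm : 1 ≤ m)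
    (hpar : Even ℓ ∨ Even m) (n₀ : List ℤ)
    (hn₀S : n₀ ∈ Sset ((ℓ : ℤ) * m + 1) (m : ℤ)) (hn₀even : ∀ n ∈ n₀, Even n)
    (p q : ℤ) :
    ((Even ℓ ∧ Even m) →
      2 * totalSeminorm ((ℓ : ℤ) * m + 1) (m : ℤ) n₀ p q =
        ((ℓ : ℚ) * m - ℓ - m) * |(p : ℚ)| +
          (ℓ : ℚ) * |(p : ℚ) - 2 * (m : ℚ) * (q : ℚ)| +
          (m : ℚ) * |(p : ℚ) + 2 * (ℓ : ℚ) * (q : ℚ)|) ∧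
    (Odd ℓ →
      2 * totalSeminorm ((ℓ : ℤ) * m + 1) (m : ℤ) n₀ p q =
        ((ℓ : ℚ) - 1) * ((m : ℚ) - 1) * |(p : ℚ) + 2 * (m : ℚ) * (q : ℚ)| +
          ((ℓ : ℚ) - 1) * |(p : ℚ)| +
          (m : ℚ) * |(p : ℚ) + 2 * ((ℓ : ℚ) + (m : ℚ)) * (q : ℚ)|) ∧
    (Odd m →
      2 * totalSeminorm ((ℓ : ℤ) * m + 1) (m : ℤ) n₀ p q =
        ((ℓ : ℚ) - 1) * ((m : ℚ) - 1) * |(p : ℚ) - 2 * (ℓ : ℚ) * (q : ℚ)| +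
          (ℓ : ℚ) * |(p : ℚ) - 2 * ((ℓ : ℚ) + (m : ℚ)) * (q : ℚ)| +
          ((m : ℚ) - 1) * |(p : ℚ)|) := by
  obtain ⟨hevev, hodd_ℓ, hodd_m⟩ := sval_of_forall_even hℓ hm hpar hn₀S hn₀even
  rw [two_mul_totalSeminorm_eq hℓ hm]
  refine ⟨fun h => ?_, fun h => ?_, fun h => ?_⟩
  · rw [hevev h]
    push_cast
    ring_nf
  · rw [hodd_ℓ h]
    push_cast
    ring_nf
  · rw [hodd_m h]
    push_cast
    ring_nf
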